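/- Minimal-norm property of the canonical dual window: let Λ be a subgroup of ZMod N × ZMod N and g ∈ ℂ^N such that the Gabor frame operator S_{g,Λ} is invertible, and set g̃ = S_{g,Λ}^{−1} g. Then for every h ∈ ℂ^N satisfying the reconstruction formula f = ∑_{λ∈Λ} ⟨f, π(λ)h⟩ · π(λ)g for all f ∈ ℂ^N, one has ‖g̃‖ ≤ ‖h‖. -/
import Mathlib


open Complex Finset

/-- The time-frequency shift `π(k,r)` on `ℂ^N ≅ (ZMod N → ℂ)`:
`(π(k,r)f)(j) = e^{2πi·rj/N} · f(j−k)`. -/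
noncomputable def tfShift (N : ℕ) (k r : ZMod N) : (ZMod N → ℂ) →ₗ[ℂ] (ZMod N → ℂ) where
  toFun f := fun j => Complex.exp (2 * Real.pi * Complex.I * (((r * j).val : ℂ) / (N : ℂ))) * f (j - k)
  map_add' f g := by
    funext j
    simp [mul_add]
  map_smul' c f := by
    funext j
    simp [Pi.smul_apply, smul_eq_mul]
    ring

/-- The inner product `⟨f,g⟩ = ∑ⱼ f(j)·conj(g(j))`, linear in the first argument. -/
noncomputable def inn {N : ℕ} [NeZero N] (f g : ZMod N → ℂ) : ℂ :=
  ∑ j, f j * starRingEnd ℂ (g j)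

/-- The short-time Fourier transform `V_g f(k,r) = ⟨f, π(k,r)g⟩`. -/
noncomputable def stft {N : ℕ} [NeZero N] (g f : ZMod N → ℂ) (k r : ZMod N) : ℂ :=
  inn f (tfShift N k r g)

/-- The adjoint subgroup `Λ° = {(k,r) : l·r − k·s = 0 in ZMod N for all (l,s) ∈ Λ}`,
as a set. -/
def adjSet {N : ℕ} (Λ : AddSubgroup (ZMod N × ZMod N)) : Set (ZMod N × ZMod N) :=
  {p | ∀ q ∈ Λ, q.1 * p.2 - p.1 * q.2 = 0}

/-- The underlying finite set of a subgroup `Λ` of `ZMod N × ZMod N`. -/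
noncomputable def subFinset {N : ℕ} [NeZero N] (Λ : AddSubgroup (ZMod N × ZMod N)) :
    Finset (ZMod N × ZMod N) :=
  Set.Finite.toFinset (Set.toFinite (Λ : Set (ZMod N × ZMod N)))

/-- The underlying finite set of the adjoint subgroup `Λ°`. -/
noncomputable def adjFinset {N : ℕ} [NeZero N] (Λ : AddSubgroup (ZMod N × ZMod N)) :
    Finset (ZMod N × ZMod N) :=
  Set.Finite.toFinset (Set.toFinite (adjSet Λ))

/-- The rank-one operator `f ↦ ⟨f,h⟩·g`. -/
noncomputable def rankOne {N : ℕ} [NeZero N] (g h : ZMod N → ℂ) :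
    (ZMod N → ℂ) →ₗ[ℂ] (ZMod N → ℂ) where
  toFun f := inn f h • g
  map_add' f f' := by
    simp [inn, add_mul, Finset.sum_add_distrib, add_smul]
  map_smul' c f := by
    simp [inn, Finset.mul_sum, mul_assoc, mul_smul, smul_smul]

/-- The Gabor frame-type operator `S_{g,h,Λ} f = ∑_{λ∈Λ} ⟨f, π(λ)h⟩ · π(λ)g`. -/
noncomputable def gaborTypeOp (N : ℕ) [NeZero N] (Λ : AddSubgroup (ZMod N × ZMod N))
    (g h : ZMod N → ℂ) : (ZMod N → ℂ) →ₗ[ℂ] (ZMod N → ℂ) :=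
  ∑ lam ∈ subFinset Λ, rankOne (tfShift N lam.1 lam.2 g) (tfShift N lam.1 lam.2 h)

noncomputable def chi (N : ℕ) (a : ZMod N) : ℂ :=
  Complex.exp ((2 * Real.pi * ((a.val : ℝ) / N) : ℝ) * Complex.I)

lemma tfShift_apply (N : ℕ) (k r : ZMod N) (f : ZMod N → ℂ) (j : ZMod N) :
    tfShift N k r f j = chi N (r * j) * f (j - k) := by
  show Complex.exp _ * _ = _
  rw [chi]
  congr 2
  push_cast
  ring

lemma chi_eq_pow {N : ℕ} [NeZero N] (a : ZMod N) :
    chi N a = Complex.exp (2 * Real.pi * Complex.I / N) ^ a.val := by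
  rw [chi, ← Complex.exp_nat_mul]
  congr 1
  simp only [Complex.ofReal_mul, Complex.ofReal_div, Complex.ofReal_natCast,
    Complex.ofReal_ofNat]
  ring

lemma zeta_pow_N {N : ℕ} [NeZero N] :
    Complex.exp (2 * Real.pi * Complex.I / N) ^ N = 1 := by
  rw [← Complex.exp_nat_mul]
  have hNc : (N : ℂ) ≠ 0 := Nat.cast_ne_zero.mpr (NeZero.ne N)
  have : (N : ℂ) * (2 * Real.pi * Complex.I / N) = 2 * Real.pi * Complex.I := by
    field_simp
  rw [this, Complex.exp_two_pi_mul_I]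

lemma chi_add {N : ℕ} [NeZero N] (a b : ZMod N) : chi N (a + b) = chi N a * chi N b := by
  rw [chi_eq_pow, chi_eq_pow, chi_eq_pow, ← pow_add, ZMod.val_add,
    ← pow_eq_pow_mod _ zeta_pow_N]

lemma chi_zero {N : ℕ} [NeZero N] : chi N 0 = 1 := by
  rw [chi_eq_pow, ZMod.val_zero, pow_zero]

lemma chi_mul_chi_neg {N : ℕ} [NeZero N] (a : ZMod N) : chi N a * chi N (-a) = 1 := by
  rw [← chi_add, add_neg_cancel, chi_zero]

lemma chi_ne_zero {N : ℕ} [NeZero N] (a : ZMod N) : chi N a ≠ 0 := by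
  rw [chi]; exact Complex.exp_ne_zero _

lemma conj_chi {N : ℕ} [NeZero N] (a : ZMod N) :
    starRingEnd ℂ (chi N a) = chi N (-a) := by
  have h1 : chi N a * starRingEnd ℂ (chi N a) = 1 := by
    rw [Complex.mul_conj]
    norm_cast
    rw [chi, Complex.normSq_eq_norm_sq, Complex.norm_exp_ofReal_mul_I, one_pow]
  exact mul_left_cancel₀ (chi_ne_zero a) (h1.trans (chi_mul_chi_neg a).symm)

section InnLemmas
variable {N : ℕ} [NeZero N]

lemma inn_conj_symm (f g : ZMod N → ℂ) : inn g f = starRingEnd ℂ (inn f g) := by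
  simp [inn, map_sum, mul_comm]

lemma inn_smul_left (c : ℂ) (f g : ZMod N → ℂ) : inn (c • f) g = c * inn f g := by
  simp [inn, Finset.mul_sum, mul_assoc]

lemma inn_smul_right (c : ℂ) (f g : ZMod N → ℂ) :
    inn f (c • g) = starRingEnd ℂ c * inn f g := by
  simp [inn, Finset.mul_sum]
  ring_nf
  simp [mul_comm, mul_assoc, mul_left_comm]

lemma inn_sub_right (f g h : ZMod N → ℂ) : inn f (g - h) = inn f g - inn f h := by
  simp [inn, mul_sub, Finset.sum_sub_distrib]

-- unitarity
lemma inn_tfShift (k r : ZMod N) (f g : ZMod N → ℂ) :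
    inn (tfShift N k r f) (tfShift N k r g) = inn f g := by
  simp only [inn, tfShift_apply, map_mul]
  have h1 : ∀ j : ZMod N, chi N (r * j) * f (j - k) *
      (starRingEnd ℂ (chi N (r * j)) * starRingEnd ℂ (g (j - k)))
      = f (j - k) * starRingEnd ℂ (g (j - k)) := by
    intro j
    rw [conj_chi]
    calc chi N (r * j) * f (j - k) * (chi N (-(r * j)) * starRingEnd ℂ (g (j - k)))
        = (chi N (r * j) * chi N (-(r * j))) * (f (j - k) * starRingEnd ℂ (g (j - k))) := by
          ring
      _ = f (j - k) * starRingEnd ℂ (g (j - k)) := by rw [chi_mul_chi_neg]; ring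
  rw [Finset.sum_congr rfl fun j _ => h1 j]
  exact Fintype.sum_equiv (Equiv.subRight k) _ _ (fun j => rfl)

end InnLemmas

section Ops
variable {N : ℕ} [NeZero N]

lemma mem_subFinset {Λ : AddSubgroup (ZMod N × ZMod N)} {p : ZMod N × ZMod N} :
    p ∈ subFinset Λ ↔ p ∈ Λ := by
  simp [subFinset]

lemma gabor_apply (Λ : AddSubgroup (ZMod N × ZMod N)) (g h f : ZMod N → ℂ) :
    gaborTypeOp N Λ g h f
      = ∑ lam ∈ subFinset Λ, inn f (tfShift N lam.1 lam.2 h) • tfShift N lam.1 lam.2 g := by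
  rw [gaborTypeOp, LinearMap.sum_apply]
  rfl

lemma tfShift_comp (k₀ r₀ k r : ZMod N) (f : ZMod N → ℂ) :
    tfShift N k₀ r₀ (tfShift N k r f)
      = chi N (-(r * k₀)) • tfShift N (k₀ + k) (r₀ + r) f := by
  funext j
  simp only [Pi.smul_apply, smul_eq_mul, tfShift_apply]
  have hj : j - k₀ - k = j - (k₀ + k) := by ring
  rw [hj]
  have hcoef : chi N (r₀ * j) * chi N (r * (j - k₀))
      = chi N (-(r * k₀)) * chi N ((r₀ + r) * j) := by
    rw [← chi_add, ← chi_add]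
    congr 1
    ring
  calc chi N (r₀ * j) * (chi N (r * (j - k₀)) * f (j - (k₀ + k)))
      = (chi N (r₀ * j) * chi N (r * (j - k₀))) * f (j - (k₀ + k)) := by ring
    _ = chi N (-(r * k₀)) * (chi N ((r₀ + r) * j) * f (j - (k₀ + k))) := by rw [hcoef]; ring

lemma key_term (k₀ r₀ k r : ZMod N) (f g : ZMod N → ℂ) :
    inn (tfShift N k₀ r₀ f) (tfShift N (k₀ + k) (r₀ + r) g) • tfShift N (k₀ + k) (r₀ + r) g
      = inn f (tfShift N k r g) • tfShift N k₀ r₀ (tfShift N k r g) := by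
  set c := chi N (-(r * k₀)) with hc
  set u := tfShift N (k₀ + k) (r₀ + r) g with hu
  set w := tfShift N k r g with hw
  have hcomp : tfShift N k₀ r₀ w = c • u := tfShift_comp k₀ r₀ k r g
  have hcne : c ≠ 0 := chi_ne_zero _
  have hu' : u = c⁻¹ • tfShift N k₀ r₀ w := by
    rw [hcomp, smul_smul, inv_mul_cancel₀ hcne, one_smul]
  have hconj : starRingEnd ℂ c⁻¹ = c := by
    have h1 : c * chi N (r * k₀) = 1 := by
      rw [hc, mul_comm]; exact chi_mul_chi_neg _
    have h2 : c⁻¹ = chi N (r * k₀) := inv_eq_of_mul_eq_one_right h1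
    rw [h2, conj_chi]
  calc inn (tfShift N k₀ r₀ f) u • u
      = inn (tfShift N k₀ r₀ f) (c⁻¹ • tfShift N k₀ r₀ w) • u := by rw [← hu']
    _ = (starRingEnd ℂ c⁻¹ * inn (tfShift N k₀ r₀ f) (tfShift N k₀ r₀ w)) • u := by
        rw [inn_smul_right]
    _ = (c * inn f w) • u := by rw [hconj, inn_tfShift]
    _ = inn f w • (c • u) := by rw [smul_smul, mul_comm c, ← smul_smul]
    _ = inn f w • tfShift N k₀ r₀ w := by rw [hcomp]

lemma S_comm (Λ : AddSubgroup (ZMod N × ZMod N)) (g : ZMod N → ℂ) {k₀ r₀ : ZMod N}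
    (hmem : (k₀, r₀) ∈ Λ) (f : ZMod N → ℂ) :
    gaborTypeOp N Λ g g (tfShift N k₀ r₀ f) = tfShift N k₀ r₀ (gaborTypeOp N Λ g g f) := by
  rw [gabor_apply, gabor_apply, map_sum]
  simp only [map_smul]
  refine Finset.sum_bij' (fun p _ => p - (k₀, r₀)) (fun p _ => (k₀, r₀) + p) ?_ ?_ ?_ ?_ ?_
  · intro a ha
    rw [mem_subFinset] at ha ⊢
    exact AddSubgroup.sub_mem Λ ha hmem
  · intro a ha
    rw [mem_subFinset] at ha ⊢
    exact AddSubgroup.add_mem Λ hmem ha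
  · intro a _; simp
  · intro a _; simp
  · intro a ha
    have h1 : a.1 = k₀ + (a - (k₀, r₀)).1 := by simp
    have h2 : a.2 = r₀ + (a - (k₀, r₀)).2 := by simp
    rw [h1, h2]
    exact key_term k₀ r₀ _ _ f g

end Ops

section Main
variable {N : ℕ} [NeZero N]

lemma inn_sum_left {γ : Type*} (s : Finset γ) (F : γ → ZMod N → ℂ) (y : ZMod N → ℂ) :
    inn (∑ i ∈ s, F i) y = ∑ i ∈ s, inn (F i) y := by
  simp only [inn, Finset.sum_apply, Finset.sum_mul]
  exact Finset.sum_comm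

lemma inn_single (j : ZMod N) (v : ZMod N → ℂ) :
    inn (Pi.single j 1) v = starRingEnd ℂ (v j) := by
  simp [inn, Pi.single_apply]

lemma S_selfadj (Λ : AddSubgroup (ZMod N × ZMod N)) (g x y : ZMod N → ℂ) :
    inn (gaborTypeOp N Λ g g x) y = inn x (gaborTypeOp N Λ g g y) := by
  rw [gabor_apply, gabor_apply, inn_sum_left]
  rw [show inn x (∑ lam ∈ subFinset Λ, inn y (tfShift N lam.1 lam.2 g) • tfShift N lam.1 lam.2 g)
    = ∑ lam ∈ subFinset Λ, inn x (inn y (tfShift N lam.1 lam.2 g) • tfShift N lam.1 lam.2 g)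
    from by
      rw [inn_conj_symm, inn_sum_left, map_sum]
      exact Finset.sum_congr rfl fun lam _ => by rw [← inn_conj_symm]]
  refine Finset.sum_congr rfl fun lam _ => ?_
  rw [inn_smul_left, inn_smul_right, ← inn_conj_symm]
  ring


/-- **Minimal-norm property of the canonical dual window**: assume the Gabor frame operator
`S_{g,Λ}` is invertible and let `g̃ = S_{g,Λ}⁻¹ g`. Every dual window `h` (i.e. one satisfying
the reconstruction formula `f = ∑_{λ∈Λ} ⟨f, π(λ)h⟩ · π(λ)g` for all `f`) satisfies
`‖g̃‖ ≤ ‖h‖`, where `‖f‖ = (∑ⱼ |f(j)|²)^{1/2}`. -/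
theorem canonical_dual_minimal_norm (N : ℕ) [NeZero N]
    (Λ : AddSubgroup (ZMod N × ZMod N)) (g : ZMod N → ℂ)
    (hS : IsUnit (gaborTypeOp N Λ g g)) (h : ZMod N → ℂ)
    (hdual : ∀ f : ZMod N → ℂ, gaborTypeOp N Λ g h f = f) :
    Real.sqrt (∑ j, Complex.normSq
        ((↑hS.unit⁻¹ : (ZMod N → ℂ) →ₗ[ℂ] (ZMod N → ℂ)) g j))
      ≤ Real.sqrt (∑ j, Complex.normSq (h j)) := by
  set B : (ZMod N → ℂ) →ₗ[ℂ] (ZMod N → ℂ) := (↑hS.unit⁻¹ : (ZMod N → ℂ) →ₗ[ℂ] (ZMod N → ℂ))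
    with hB
  have hBS : ∀ f, B (gaborTypeOp N Λ g g f) = f := by
    intro f
    have h1 : (↑hS.unit⁻¹ * ↑hS.unit : (ZMod N → ℂ) →ₗ[ℂ] (ZMod N → ℂ)) = 1 :=
      hS.unit.inv_mul
    rw [IsUnit.unit_spec] at h1
    calc B (gaborTypeOp N Λ g g f)
        = ((↑hS.unit⁻¹ : (ZMod N → ℂ) →ₗ[ℂ] (ZMod N → ℂ)) * gaborTypeOp N Λ g g) f := rfl
      _ = (1 : (ZMod N → ℂ) →ₗ[ℂ] (ZMod N → ℂ)) f := by rw [h1]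
      _ = f := rfl
  have hSB : ∀ f, gaborTypeOp N Λ g g (B f) = f := by
    intro f
    have h1 : (↑hS.unit * ↑hS.unit⁻¹ : (ZMod N → ℂ) →ₗ[ℂ] (ZMod N → ℂ)) = 1 :=
      hS.unit.mul_inv
    rw [IsUnit.unit_spec] at h1
    calc gaborTypeOp N Λ g g (B f)
        = ((gaborTypeOp N Λ g g) * (↑hS.unit⁻¹ : (ZMod N → ℂ) →ₗ[ℂ] (ZMod N → ℂ))) f := rfl
      _ = (1 : (ZMod N → ℂ) →ₗ[ℂ] (ZMod N → ℂ)) f := by rw [h1]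
      _ = f := rfl
  have hBcomm : ∀ k₀ r₀ : ZMod N, (k₀, r₀) ∈ Λ → ∀ f,
      B (tfShift N k₀ r₀ f) = tfShift N k₀ r₀ (B f) := by
    intro k₀ r₀ hmem f
    conv_lhs => rw [← hSB f]
    rw [← S_comm Λ g hmem (B f), hBS]
  have hBselfadj : ∀ x y, inn (B x) y = inn x (B y) := by
    intro x y
    calc inn (B x) y = inn (B x) (gaborTypeOp N Λ g g (B y)) := by rw [hSB]
      _ = inn (gaborTypeOp N Λ g g (B x)) (B y) := (S_selfadj Λ g (B x) (B y)).symm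
      _ = inn x (B y) := by rw [hSB]
  set gt : ZMod N → ℂ := B g with hgt
  have hdual2 : ∀ f, gaborTypeOp N Λ g gt f = f := by
    intro f
    rw [gabor_apply]
    have : ∀ lam ∈ subFinset Λ,
        inn f (tfShift N lam.1 lam.2 gt) • tfShift N lam.1 lam.2 g
        = inn (B f) (tfShift N lam.1 lam.2 g) • tfShift N lam.1 lam.2 g := by
      intro lam hlam
      rw [mem_subFinset] at hlam
      rw [← hBcomm lam.1 lam.2 (by rwa [Prod.mk.eta]) g, ← hBselfadj]
    rw [Finset.sum_congr rfl this, ← gabor_apply, hSB]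
  set d : ZMod N → ℂ := h - gt with hd
  have hT : ∀ f, gaborTypeOp N Λ g d f = 0 := by
    intro f
    rw [gabor_apply]
    have : ∀ lam ∈ subFinset Λ,
        inn f (tfShift N lam.1 lam.2 d) • tfShift N lam.1 lam.2 g
        = inn f (tfShift N lam.1 lam.2 h) • tfShift N lam.1 lam.2 g
          - inn f (tfShift N lam.1 lam.2 gt) • tfShift N lam.1 lam.2 g := by
      intro lam _
      rw [hd, map_sub, inn_sub_right, sub_smul]
    rw [Finset.sum_congr rfl this, Finset.sum_sub_distrib, ← gabor_apply, ← gabor_apply,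
      hdual, hdual2, sub_self]
  -- orthogonality
  have horth : inn gt d = 0 := by
    have hkey : ∀ j : ZMod N, (B (gaborTypeOp N Λ g d (Pi.single j 1))) j = 0 := by
      intro j; rw [hT, map_zero]; rfl
    have hzero : (0 : ℂ) = ∑ j : ZMod N, (B (gaborTypeOp N Λ g d (Pi.single j 1))) j := by
      rw [Finset.sum_congr rfl fun j _ => hkey j]; simp
    have hexp : ∀ j : ZMod N, (B (gaborTypeOp N Λ g d (Pi.single j 1))) j
        = ∑ lam ∈ subFinset Λ,
            starRingEnd ℂ (tfShift N lam.1 lam.2 d j) * (B (tfShift N lam.1 lam.2 g)) j := by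
      intro j
      rw [gabor_apply, map_sum]
      simp only [map_smul, inn_single]
      rw [Finset.sum_apply]
      exact Finset.sum_congr rfl fun lam _ => rfl
    rw [Finset.sum_congr rfl fun j _ => hexp j, Finset.sum_comm] at hzero
    have hterm : ∀ lam ∈ subFinset Λ,
        ∑ j : ZMod N, starRingEnd ℂ (tfShift N lam.1 lam.2 d j) * (B (tfShift N lam.1 lam.2 g)) j
        = inn gt d := by
      intro lam hlam
      rw [mem_subFinset] at hlam
      have : ∑ j : ZMod N, starRingEnd ℂ (tfShift N lam.1 lam.2 d j)
            * (B (tfShift N lam.1 lam.2 g)) j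
          = inn (B (tfShift N lam.1 lam.2 g)) (tfShift N lam.1 lam.2 d) := by
        rw [inn]; exact Finset.sum_congr rfl fun j _ => mul_comm _ _
      rw [this, hBcomm lam.1 lam.2 (by rwa [Prod.mk.eta]) g, inn_tfShift]
    rw [Finset.sum_congr rfl hterm, Finset.sum_const] at hzero
    have hne : (subFinset Λ).Nonempty := ⟨0, mem_subFinset.mpr (AddSubgroup.zero_mem Λ)⟩
    have hcard : ((subFinset Λ).card : ℂ) ≠ 0 := by
      exact_mod_cast Nat.cast_ne_zero.mpr (Finset.card_ne_zero_of_mem hne.choose_spec)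
    rw [nsmul_eq_mul] at hzero
    exact (mul_eq_zero.mp hzero.symm).resolve_left hcard
  -- final norm computation
  have hpt : ∀ j, h j = gt j + d j := by intro j; simp [hd]
  have hre : ∑ j : ZMod N, (gt j * starRingEnd ℂ (d j)).re = 0 := by
    have : (∑ j : ZMod N, gt j * starRingEnd ℂ (d j)).re = 0 := by
      rw [← inn, horth]; rfl
    rwa [Complex.re_sum] at this
  have hsum : ∑ j : ZMod N, Complex.normSq (h j)
      = ∑ j : ZMod N, Complex.normSq (gt j) + ∑ j : ZMod N, Complex.normSq (d j) := by
    have : ∀ j : ZMod N, Complex.normSq (h j)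
        = Complex.normSq (gt j) + Complex.normSq (d j)
          + 2 * (gt j * starRingEnd ℂ (d j)).re := by
      intro j; rw [hpt j, Complex.normSq_add]
    rw [Finset.sum_congr rfl fun j _ => this j]
    rw [Finset.sum_add_distrib, Finset.sum_add_distrib, ← Finset.mul_sum, hre]
    ring
  apply Real.sqrt_le_sqrt
  rw [hsum]
  have : 0 ≤ ∑ j : ZMod N, Complex.normSq (d j) :=
    Finset.sum_nonneg fun j _ => Complex.normSq_nonneg _
  linarith
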